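/- Variance kernel without singularities: with L_A, L_B, Δ(z₁,z₂), ω_A, ω_B, m_fc as in the two-point setting, whenever z₁ ≠ z₂, m_fc(z₁) ≠ m_fc(z₂) and Δ(z₁,z₂) ≠ 0, one has log[((ω_A(z₁) − ω_A(z₂))(ω_B(z₁) − ω_B(z₂)))/((z₁ − z₂)(F_fc(z₁) − F_fc(z₂)))] = −log Δ(z₁,z₂), where F_fc(z) = −1/m_fc(z), up to an integer multiple of 2πi; in particular the ratio inside the first logarithm equals 1/Δ(z₁,z₂). -/

import Mathlib

/-- The two-point sum `L(z₁,z₂) = (1/N) Σ_j [(c_j − ω(z₁))(c_j − ω(z₂))]⁻¹`. -/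
noncomputable def twoPointSum {N : ℕ} (c : Fin N → ℝ) (ω : ℂ → ℂ) (z₁ z₂ : ℂ) : ℂ :=
  (1 / (N : ℂ)) * ∑ j : Fin N, (((c j : ℂ) - ω z₁) * ((c j : ℂ) - ω z₂))⁻¹

/-- The two-point Jacobian `Δ(z₁,z₂) = 1 − (L_A/(m₁m₂) − 1)(L_B/(m₁m₂) − 1)`. -/
noncomputable def twoPointJacobian {N : ℕ} (a b : Fin N → ℝ) (ωA ωB mfc : ℂ → ℂ)
    (z₁ z₂ : ℂ) : ℂ :=
  1 - (twoPointSum b ωA z₁ z₂ / (mfc z₁ * mfc z₂) - 1) *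
      (twoPointSum a ωB z₁ z₂ / (mfc z₁ * mfc z₂) - 1)

/-!
Subtracting the subordination equation `ω_A + ω_B − z = F_fc` at `z₁` and `z₂` gives
`z₁ − z₂ = (ω_A(z₁) − ω_A(z₂)) + (ω_B(z₁) − ω_B(z₂)) − (F_fc(z₁) − F_fc(z₂))`, while the resolvent
identity turns the representations `m_fc = (1/N) Σ (b_j − ω_A)⁻¹ = (1/N) Σ (a_j − ω_B)⁻¹` into
`m_fc(z₁) − m_fc(z₂) = (ω_A(z₁) − ω_A(z₂)) L_A = (ω_B(z₁) − ω_B(z₂)) L_B`. Eliminating `L_A`, `L_B`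
and `z₁ − z₂` from `Δ` is then pure field algebra, and the logarithmic form follows because
`log x⁻¹` and `−log x` have the same exponential.
-/

lemma Complex.ofReal_sub_ne_zero_of_im_ne_zero {c : ℝ} {w : ℂ} (hw : w.im ≠ 0) :
    (c : ℂ) - w ≠ 0 := by
  rw [sub_ne_zero]
  rintro rfl
  exact hw (Complex.ofReal_im c)

lemma sub_eq_mul_twoPointSum {N : ℕ} (c : Fin N → ℝ) (ω : ℂ → ℂ) {z₁ z₂ : ℂ}
    (h₁ : (ω z₁).im ≠ 0) (h₂ : (ω z₂).im ≠ 0) :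
    (1 / (N : ℂ)) * ∑ j : Fin N, ((c j : ℂ) - ω z₁)⁻¹
        - (1 / (N : ℂ)) * ∑ j : Fin N, ((c j : ℂ) - ω z₂)⁻¹
      = (ω z₁ - ω z₂) * twoPointSum c ω z₁ z₂ := by
  have resolvent (j : Fin N) : ((c j : ℂ) - ω z₁)⁻¹ - ((c j : ℂ) - ω z₂)⁻¹
      = (ω z₁ - ω z₂) * (((c j : ℂ) - ω z₁) * ((c j : ℂ) - ω z₂))⁻¹ := by
    rw [inv_sub_inv (Complex.ofReal_sub_ne_zero_of_im_ne_zero h₁)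
      (Complex.ofReal_sub_ne_zero_of_im_ne_zero h₂), div_eq_mul_inv]
    ring
  rw [twoPointSum, ← mul_sub, ← Finset.sum_sub_distrib, Finset.sum_congr rfl fun j _ => resolvent j,
    ← Finset.mul_sum]
  ring

lemma one_sub_mul_eq_of_subordination {K : Type*} [Field K] {dA dB dz m₁ m₂ LA LB : K}
    (hm₁ : m₁ ≠ 0) (hm₂ : m₂ ≠ 0) (hm : m₁ ≠ m₂)
    (hA : m₁ - m₂ = dA * LA) (hB : m₁ - m₂ = dB * LB)
    (hz : dA + dB - dz = -m₁⁻¹ - -m₂⁻¹) :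
    1 - (LA / (m₁ * m₂) - 1) * (LB / (m₁ * m₂) - 1) = dz * (-m₁⁻¹ - -m₂⁻¹) / (dA * dB) := by
  have hδ : m₁ - m₂ ≠ 0 := sub_ne_zero.mpr hm
  have hdA : dA ≠ 0 := left_ne_zero_of_mul (hA ▸ hδ)
  have hdB : dB ≠ 0 := left_ne_zero_of_mul (hB ▸ hδ)
  obtain rfl : LA = (m₁ - m₂) / dA := eq_div_of_mul_eq hdA (by rw [hA, mul_comm])
  obtain rfl : LB = (m₁ - m₂) / dB := eq_div_of_mul_eq hdB (by rw [hB, mul_comm])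
  obtain rfl : dz = dA + dB + m₁⁻¹ - m₂⁻¹ := by linear_combination -hz
  field_simp
  ring

lemma Complex.exists_log_inv_eq_neg_log_add (x : ℂ) :
    ∃ k : ℤ, Complex.log x⁻¹ = -Complex.log x + 2 * Real.pi * Complex.I * k := by
  rcases eq_or_ne x 0 with rfl | hx
  · exact ⟨0, by simp⟩
  obtain ⟨k, hk⟩ := Complex.exp_eq_exp_iff_exists_int.mp <| show
    Complex.exp (Complex.log x⁻¹) = Complex.exp (-Complex.log x) by
      rw [Complex.exp_log (inv_ne_zero hx), Complex.exp_neg, Complex.exp_log hx]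
  exact ⟨k, by rw [hk]; ring⟩

theorem variance_kernel_without_singularities_general {N : ℕ}
    (a b : Fin N → ℝ) (ωA ωB mfc : ℂ → ℂ) (z₁ z₂ : ℂ)
    (hz₁ : 0 < z₁.im) (hz₂ : 0 < z₂.im)
    (hmapA : ∀ z : ℂ, 0 < z.im → 0 < (ωA z).im)
    (hmapB : ∀ z : ℂ, 0 < z.im → 0 < (ωB z).im)
    (hrepA : ∀ z : ℂ, 0 < z.im →
      mfc z = (1 / (N : ℂ)) * ∑ j : Fin N, ((b j : ℂ) - ωA z)⁻¹)
    (hrepB : ∀ z : ℂ, 0 < z.im →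
      mfc z = (1 / (N : ℂ)) * ∑ j : Fin N, ((a j : ℂ) - ωB z)⁻¹)
    (hsub : ∀ z : ℂ, 0 < z.im → ωA z + ωB z - z = -(mfc z)⁻¹)
    (hm₁ : mfc z₁ ≠ 0) (hm₂ : mfc z₂ ≠ 0) (hm : mfc z₁ ≠ mfc z₂) :
    ((ωA z₁ - ωA z₂) * (ωB z₁ - ωB z₂)) /
        ((z₁ - z₂) * (-(mfc z₁)⁻¹ - -(mfc z₂)⁻¹))
      = (twoPointJacobian a b ωA ωB mfc z₁ z₂)⁻¹ ∧
    ∃ k : ℤ,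
      Complex.log (((ωA z₁ - ωA z₂) * (ωB z₁ - ωB z₂)) /
          ((z₁ - z₂) * (-(mfc z₁)⁻¹ - -(mfc z₂)⁻¹)))
        = -Complex.log (twoPointJacobian a b ωA ωB mfc z₁ z₂)
          + 2 * Real.pi * Complex.I * (k : ℂ) := by
  have hA : mfc z₁ - mfc z₂ = (ωA z₁ - ωA z₂) * twoPointSum b ωA z₁ z₂ := by
    rw [hrepA z₁ hz₁, hrepA z₂ hz₂]
    exact sub_eq_mul_twoPointSum b ωA (hmapA z₁ hz₁).ne' (hmapA z₂ hz₂).ne'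
  have hB : mfc z₁ - mfc z₂ = (ωB z₁ - ωB z₂) * twoPointSum a ωB z₁ z₂ := by
    rw [hrepB z₁ hz₁, hrepB z₂ hz₂]
    exact sub_eq_mul_twoPointSum a ωB (hmapB z₁ hz₁).ne' (hmapB z₂ hz₂).ne'
  have hz : ωA z₁ - ωA z₂ + (ωB z₁ - ωB z₂) - (z₁ - z₂) = -(mfc z₁)⁻¹ - -(mfc z₂)⁻¹ := by
    rw [← hsub z₁ hz₁, ← hsub z₂ hz₂]
    ring
  have hratio : ((ωA z₁ - ωA z₂) * (ωB z₁ - ωB z₂)) /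
        ((z₁ - z₂) * (-(mfc z₁)⁻¹ - -(mfc z₂)⁻¹))
      = (twoPointJacobian a b ωA ωB mfc z₁ z₂)⁻¹ := by
    rw [twoPointJacobian, one_sub_mul_eq_of_subordination hm₁ hm₂ hm hA hB hz, inv_div]
  exact ⟨hratio, hratio ▸ Complex.exists_log_inv_eq_neg_log_add _⟩

/-- Variance kernel without singularities: whenever `z₁ ≠ z₂`, `m_fc(z₁) ≠ m_fc(z₂)`
and `Δ(z₁,z₂) ≠ 0`, the ratio
`((ω_A(z₁) − ω_A(z₂))(ω_B(z₁) − ω_B(z₂)))/((z₁ − z₂)(F_fc(z₁) − F_fc(z₂)))`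
equals `1/Δ(z₁,z₂)` (where `F_fc = −1/m_fc`), and its logarithm equals
`−log Δ(z₁,z₂)` up to an integer multiple of `2πi`. -/
theorem variance_kernel_without_singularities {N : ℕ} (hN : 0 < N)
    (a b : Fin N → ℝ) (ωA ωB mfc : ℂ → ℂ) (z₁ z₂ : ℂ)
    (hz₁ : 0 < z₁.im) (hz₂ : 0 < z₂.im) (hzz : z₁ ≠ z₂)
    (hmapA : ∀ z : ℂ, 0 < z.im → 0 < (ωA z).im)
    (hmapB : ∀ z : ℂ, 0 < z.im → 0 < (ωB z).im)
    (hrepA : ∀ z : ℂ, 0 < z.im →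
      mfc z = (1 / (N : ℂ)) * ∑ j : Fin N, ((b j : ℂ) - ωA z)⁻¹)
    (hrepB : ∀ z : ℂ, 0 < z.im →
      mfc z = (1 / (N : ℂ)) * ∑ j : Fin N, ((a j : ℂ) - ωB z)⁻¹)
    (hsub : ∀ z : ℂ, 0 < z.im → ωA z + ωB z - z = -(mfc z)⁻¹)
    (hm₁ : mfc z₁ ≠ 0) (hm₂ : mfc z₂ ≠ 0) (hm : mfc z₁ ≠ mfc z₂)
    (hΔ : twoPointJacobian a b ωA ωB mfc z₁ z₂ ≠ 0) :
    ((ωA z₁ - ωA z₂) * (ωB z₁ - ωB z₂)) /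
        ((z₁ - z₂) * (-(mfc z₁)⁻¹ - -(mfc z₂)⁻¹))
      = (twoPointJacobian a b ωA ωB mfc z₁ z₂)⁻¹ ∧
    ∃ k : ℤ,
      Complex.log (((ωA z₁ - ωA z₂) * (ωB z₁ - ωB z₂)) /
          ((z₁ - z₂) * (-(mfc z₁)⁻¹ - -(mfc z₂)⁻¹)))
        = -Complex.log (twoPointJacobian a b ωA ωB mfc z₁ z₂)
          + 2 * Real.pi * Complex.I * (k : ℂ) :=
  variance_kernel_without_singularities_general a b ωA ωB mfc z₁ z₂ hz₁ hz₂ hmapA hmapB hrepA hrepB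
    hsub hm₁ hm₂ hm
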